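/- If n > m ≥ 0, 1 ≤ d ≤ 9, k ≥ 2 and C_n − C_m = d·(10^k − 1)/9, then |1 − α^(−n)·10^k·(2d/9)| < 3/α^(n−m), where α = 3 + 2√2. -/
import Mathlib


def C : ℕ → ℤ
  | 0 => 1
  | 1 => 3
  | n + 2 => 6 * C (n + 1) - C n

lemma binet : ∀ n : ℕ, ((C n : ℝ)) * 2 = (3 + 2 * Real.sqrt 2) ^ n + (3 - 2 * Real.sqrt 2) ^ n
  | 0 => by norm_num [C]
  | 1 => by norm_num [C]
  | n + 2 => by
    have h1 := binet n
    have h2 := binet (n + 1)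
    have hs : Real.sqrt 2 * Real.sqrt 2 = 2 := Real.mul_self_sqrt (by norm_num)
    show ((6 * C (n+1) - C n : ℤ) : ℝ) * 2 = _
    push_cast
    have e1 : (3 + 2 * Real.sqrt 2) ^ (n+2)
        = (3 + 2 * Real.sqrt 2) ^ n * (17 + 12 * Real.sqrt 2) := by
      rw [pow_add]; linear_combination ((3 + 2 * Real.sqrt 2) ^ n * 4) * hs
    have e2 : (3 - 2 * Real.sqrt 2) ^ (n+2)
        = (3 - 2 * Real.sqrt 2) ^ n * (17 - 12 * Real.sqrt 2) := by
      rw [pow_add]; linear_combination ((3 - 2 * Real.sqrt 2) ^ n * 4) * hs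
    have e3 : (3 + 2 * Real.sqrt 2) ^ (n+1)
        = (3 + 2 * Real.sqrt 2) ^ n * (3 + 2 * Real.sqrt 2) := pow_succ _ _
    have e4 : (3 - 2 * Real.sqrt 2) ^ (n+1)
        = (3 - 2 * Real.sqrt 2) ^ n * (3 - 2 * Real.sqrt 2) := pow_succ _ _
    rw [e1, e2]
    rw [e3, e4] at h2
    linarith [h1, h2]

lemma keyident (A B G H e : ℝ) (hAB : A * B = 1) (hGH : H * G = 1) :
    1 - B * G * ((A * H + B * G) - (A + B) + e) = G * (1 + B ^ 2 - B ^ 2 * G - B * e) := by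
  linear_combination (G - G * H) * hAB - hGH

set_option maxHeartbeats 1000000 in
theorem lucas_balancing_linear_form_one (n m k : ℕ) (d : ℤ)
    (hmn : m < n) (hd1 : 1 ≤ d) (hd9 : d ≤ 9) (hk : 2 ≤ k)
    (heq : 9 * (C n - C m) = d * (10 ^ k - 1)) :
    |1 - (3 + 2 * Real.sqrt 2) ^ (-(n : ℤ)) * 10 ^ k * (2 * (d : ℝ) / 9)| <
      3 / (3 + 2 * Real.sqrt 2) ^ (n - m) := by
  obtain ⟨t, rfl⟩ : ∃ t, n = m + (t + 1) := ⟨n - m - 1, by omega⟩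
  have hs : Real.sqrt 2 * Real.sqrt 2 = 2 := Real.mul_self_sqrt (by norm_num)
  have hs0 : (0:ℝ) ≤ Real.sqrt 2 := Real.sqrt_nonneg 2
  have hαβ : (3 + 2 * Real.sqrt 2) * (3 - 2 * Real.sqrt 2) = 1 := by
    linear_combination (-4 : ℝ) * hs
  have hβ0 : (0:ℝ) < 3 - 2 * Real.sqrt 2 := by nlinarith [hs, hs0]
  have hβ1 : (3:ℝ) - 2 * Real.sqrt 2 < 1 := by nlinarith [hs, hs0]
  have hα0 : (0:ℝ) < 3 + 2 * Real.sqrt 2 := by nlinarith [hs0]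
  have hB0 : (0:ℝ) < (3 - 2 * Real.sqrt 2) ^ m := pow_pos hβ0 m
  have hB1 : (3 - 2 * Real.sqrt 2) ^ m ≤ 1 := pow_le_one₀ hβ0.le hβ1.le
  have hG0 : (0:ℝ) < (3 - 2 * Real.sqrt 2) ^ (t + 1) := pow_pos hβ0 (t + 1)
  have hG1 : (3 - 2 * Real.sqrt 2) ^ (t + 1) ≤ 1 := pow_le_one₀ hβ0.le hβ1.le
  have hH0 : (0:ℝ) < (3 + 2 * Real.sqrt 2) ^ (t + 1) := pow_pos hα0 (t + 1)
  have hsub : m + (t + 1) - m = t + 1 := by omega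
  rw [hsub]
  have hzpow : (3 + 2 * Real.sqrt 2) ^ (-((m + (t + 1) : ℕ) : ℤ))
      = (3 - 2 * Real.sqrt 2) ^ m * (3 - 2 * Real.sqrt 2) ^ (t + 1) := by
    rw [zpow_neg, zpow_natCast]
    refine inv_eq_of_mul_eq_one_right ?_
    rw [pow_add]
    calc (3 + 2 * Real.sqrt 2) ^ m * (3 + 2 * Real.sqrt 2) ^ (t+1) *
          ((3 - 2 * Real.sqrt 2) ^ m * (3 - 2 * Real.sqrt 2) ^ (t+1))
        = ((3 + 2 * Real.sqrt 2) * (3 - 2 * Real.sqrt 2)) ^ m *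
          ((3 + 2 * Real.sqrt 2) * (3 - 2 * Real.sqrt 2)) ^ (t+1) := by
          rw [mul_pow, mul_pow]; ring
      _ = 1 := by rw [hαβ, one_pow, one_pow, mul_one]
  rw [hzpow]
  have hdiv : (3:ℝ) / (3 + 2 * Real.sqrt 2) ^ (t + 1)
      = 3 * (3 - 2 * Real.sqrt 2) ^ (t + 1) := by
    rw [div_eq_iff hH0.ne', mul_assoc, ← mul_pow, mul_comm (3 - 2 * Real.sqrt 2),
      hαβ, one_pow, mul_one]
  rw [hdiv]
  have heqR : (9:ℝ) * ((C (m + (t+1)) : ℝ) - (C m : ℝ)) = (d:ℝ) * (10 ^ k - 1) := by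
    exact_mod_cast heq
  have hb1 := binet (m + (t + 1))
  have hb2 := binet m
  rw [pow_add, pow_add] at hb1
  have hval : (10:ℝ) ^ k * (2 * (d:ℝ) / 9) =
      ((3 + 2 * Real.sqrt 2) ^ m * (3 + 2 * Real.sqrt 2) ^ (t+1)
        + (3 - 2 * Real.sqrt 2) ^ m * (3 - 2 * Real.sqrt 2) ^ (t+1))
      - ((3 + 2 * Real.sqrt 2) ^ m + (3 - 2 * Real.sqrt 2) ^ m) + 2 * (d:ℝ) / 9 := by
    linear_combination (-(2:ℝ)/9) * heqR + hb1 - hb2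
  have hE : 1 - (3 - 2 * Real.sqrt 2) ^ m * (3 - 2 * Real.sqrt 2) ^ (t+1) * 10 ^ k *
        (2 * (d:ℝ) / 9)
      = (3 - 2 * Real.sqrt 2) ^ (t+1) *
        (1 + ((3 - 2 * Real.sqrt 2) ^ m) ^ 2
          - ((3 - 2 * Real.sqrt 2) ^ m) ^ 2 * (3 - 2 * Real.sqrt 2) ^ (t+1)
          - (3 - 2 * Real.sqrt 2) ^ m * (2 * (d:ℝ) / 9)) := by
    have harr : (3 - 2 * Real.sqrt 2) ^ m * (3 - 2 * Real.sqrt 2) ^ (t+1) * 10 ^ k *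
          (2 * (d:ℝ) / 9)
        = (3 - 2 * Real.sqrt 2) ^ m * (3 - 2 * Real.sqrt 2) ^ (t+1) *
          ((10:ℝ) ^ k * (2 * (d:ℝ) / 9)) := by ring
    rw [harr, hval]
    exact keyident _ _ _ _ _
      (by rw [← mul_pow, hαβ, one_pow])
      (by rw [← mul_pow, hαβ, one_pow])
  rw [hE, abs_mul, abs_of_pos hG0]
  have hd1' : (1:ℝ) ≤ (d:ℝ) := by exact_mod_cast hd1
  have hd9' : (d:ℝ) ≤ 9 := by exact_mod_cast hd9
  have hpos1 : (0:ℝ) < (3 - 2 * Real.sqrt 2) ^ m * (2 * (d:ℝ) / 9) := by positivity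
  have hpos2 : (0:ℝ) < ((3 - 2 * Real.sqrt 2) ^ m) ^ 2 * (3 - 2 * Real.sqrt 2) ^ (t+1) := by
    positivity
  clear heq heqR hb1 hb2 hval hE hzpow hdiv hαβ hs hs0
  have hsq : ((3 - 2 * Real.sqrt 2) ^ m) ^ 2 ≤ 1 := by
    rw [sq]; exact mul_le_one₀ hB1 hB0.le hB1
  have he2 : 2 * (d:ℝ) / 9 ≤ 2 := by linarith
  have he0 : (0:ℝ) ≤ 2 * (d:ℝ) / 9 := by linarith
  have hBe : (3 - 2 * Real.sqrt 2) ^ m * (2 * (d:ℝ) / 9) ≤ 2 := by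
    calc (3 - 2 * Real.sqrt 2) ^ m * (2 * (d:ℝ) / 9) ≤ 1 * 2 :=
      mul_le_mul hB1 he2 he0 one_pos.le
    _ = 2 := one_mul 2
  have hB2G : ((3 - 2 * Real.sqrt 2) ^ m) ^ 2 * (3 - 2 * Real.sqrt 2) ^ (t+1) ≤ 1 :=
    mul_le_one₀ hsq hG0.le hG1
  have habs : |1 + ((3 - 2 * Real.sqrt 2) ^ m) ^ 2
      - ((3 - 2 * Real.sqrt 2) ^ m) ^ 2 * (3 - 2 * Real.sqrt 2) ^ (t+1)
      - (3 - 2 * Real.sqrt 2) ^ m * (2 * (d:ℝ) / 9)| < 3 := by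
    rw [abs_lt]
    refine ⟨by linarith [hBe, hB2G, sq_nonneg ((3 - 2 * Real.sqrt 2) ^ m)], ?_⟩
    linarith [hsq, hpos1, hpos2]
  calc (3 - 2 * Real.sqrt 2) ^ (t+1) * |1 + ((3 - 2 * Real.sqrt 2) ^ m) ^ 2
        - ((3 - 2 * Real.sqrt 2) ^ m) ^ 2 * (3 - 2 * Real.sqrt 2) ^ (t+1)
        - (3 - 2 * Real.sqrt 2) ^ m * (2 * (d:ℝ) / 9)|
      < (3 - 2 * Real.sqrt 2) ^ (t+1) * 3 := mul_lt_mul_of_pos_left habs hG0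
    _ = 3 * (3 - 2 * Real.sqrt 2) ^ (t+1) := by ring
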